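/- arXiv:2508.05866 — 4 statements merged into one kernel-verified Lean document; each statement's English description precedes it below -/
import Mathlib

section
/- Let Λ ∈ ℝ^{J×K} with J ≥ K and suppose the top K×K block Λ_{[1:K,:]} is lower-triangular with nonzero diagonal entries. If G ∈ ℝ^{K×K} is orthogonal and Λ G also has lower-triangular top K×K block, then G is diagonal with entries ±1. -/
/-!
The top block of `Λ * G` is `L * G`, where `L` is the top block of `Λ`; since `L` is lower
triangular with invertible diagonal, `G = L⁻¹ * (L * G)` is lower triangular. For orthogonal `G`
the lower-triangular matrix `G⁻¹` equals the upper-triangular `Gᵀ`, so `G` is diagonal, and then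
`Gᵀ * G = 1` says that each diagonal entry squares to `1`.
-/

open Matrix

namespace Matrix

variable {n R : Type*}

theorem isDiag_of_isLowerTriangular_of_isUpperTriangular [LinearOrder n] [Zero R]
    {M : Matrix n n R}
    (hlow : M.IsLowerTriangular) (hup : M.IsUpperTriangular) : M.IsDiag := fun _ _ hij =>
  hij.lt_or_gt.elim (fun h => hlow (OrderDual.toDual_lt_toDual.mpr h)) (fun h => hup h)

variable [Fintype n] [DecidableEq n] [CommRing R]

section LinearOrder

variable [LinearOrder n]

theorem IsLowerTriangular.of_mul_left {L G : Matrix n n R} (hL : L.IsLowerTriangular)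
    (hdiag : ∀ i, IsUnit (L i i)) (hLG : (L * G).IsLowerTriangular) :
    G.IsLowerTriangular := by
  have hdet : IsUnit L.det := by
    rw [det_of_isLowerTriangular L hL]
    exact IsUnit.prod_univ_iff.mpr hdiag
  have := L.invertibleOfIsUnitDet hdet
  rw [← inv_mul_cancel_left_of_invertible L G]
  exact (blockTriangular_inv_of_blockTriangular hL).mul hLG

theorem IsLowerTriangular.isDiag_of_transpose_mul_self_eq_one {G : Matrix n n R}
    (hG : G.IsLowerTriangular) (horth : Gᵀ * G = 1) : G.IsDiag := by
  have := invertibleOfLeftInverse G Gᵀ horth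
  have hinv : G⁻¹ = Gᵀ := inv_eq_left_inv horth
  have hGt : Gᵀ.IsLowerTriangular := hinv ▸ blockTriangular_inv_of_blockTriangular hG
  exact isDiag_of_isLowerTriangular_of_isUpperTriangular hG
    (Matrix.blockTriangular_transpose_iff.mp hGt)

end LinearOrder

theorem IsDiag.diag_eq_one_or_neg_one_of_transpose_mul_self_eq_one [IsDomain R]
    {G : Matrix n n R} (hG : G.IsDiag) (horth : Gᵀ * G = 1) (i : n) :
    G i i = 1 ∨ G i i = -1 := by
  rw [← hG.diagonal_diag, diagonal_transpose, diagonal_mul_diagonal] at horth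
  exact mul_self_eq_one_iff.mp (by simpa using congrFun (congrFun horth i) i)

end Matrix

theorem stmt_9 {J K : ℕ} (hJK : K ≤ J) (Λ : Matrix (Fin J) (Fin K) ℝ)
    (G : Matrix (Fin K) (Fin K) ℝ)
    (hlow : ∀ i j : Fin K, i < j → Λ (Fin.castLE hJK i) j = 0)
    (hdiagne : ∀ i : Fin K, Λ (Fin.castLE hJK i) i ≠ 0)
    (horth : Gᵀ * G = 1)
    (hlow' : ∀ i j : Fin K, i < j → (Λ * G) (Fin.castLE hJK i) j = 0) :
    G.IsDiag ∧ ∀ i : Fin K, G i i = 1 ∨ G i i = -1 := by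
  set L := Λ.submatrix (Fin.castLE hJK) id
  have hL : L.IsLowerTriangular := fun i j hij => hlow i j hij
  have hLG : (L * G).IsLowerTriangular := fun i j hij => hlow' i j hij
  have hG : G.IsDiag :=
    (hL.of_mul_left (fun i => (hdiagne i).isUnit) hLG).isDiag_of_transpose_mul_self_eq_one horth
  exact ⟨hG, hG.diag_eq_one_or_neg_one_of_transpose_mul_self_eq_one horth⟩
end

section
/- Let Λ ∈ ℝ^{J×K} with J ≥ K such that Λ_{[1:K,:]} is lower-triangular with all diagonal entries equal to 1. If G ∈ ℝ^{K×K} is invertible, Λ G has lower-triangular top K×K block with unit diagonal, and G^{-1} D G^{-T} is diagonal for some positive-definite diagonal matrix D, then G = I_K. -/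
open Matrix

theorem stmt_10 {J K : ℕ} (hJK : K ≤ J) (Λ : Matrix (Fin J) (Fin K) ℝ)
    (G : Matrix (Fin K) (Fin K) ℝ) (d : Fin K → ℝ)
    (hlow : ∀ i j : Fin K, i < j → Λ (Fin.castLE hJK i) j = 0)
    (hdiag1 : ∀ i : Fin K, Λ (Fin.castLE hJK i) i = 1)
    (hG : IsUnit G)
    (hlow' : ∀ i j : Fin K, i < j → (Λ * G) (Fin.castLE hJK i) j = 0)
    (hdiag1' : ∀ i : Fin K, (Λ * G) (Fin.castLE hJK i) i = 1)
    (hd : ∀ i : Fin K, 0 < d i)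
    (hMdiag : (G⁻¹ * Matrix.diagonal d * (G⁻¹)ᵀ).IsDiag) :
    G = 1 := by
  have hGdet : IsUnit G.det := (Matrix.isUnit_iff_isUnit_det G).mp hG
  -- Step 1: G is lower triangular (strictly upper entries vanish)
  have hGlow : ∀ (n : ℕ) (i j : Fin K), i.val = n → i < j → G i j = 0 := by
    intro n
    induction n using Nat.strong_induction_on with
    | _ n ih =>
      intro i j hn hij
      have h0 := hlow' i j hij
      rw [Matrix.mul_apply] at h0
      rw [Finset.sum_eq_single i] at h0
      · rw [hdiag1 i, one_mul] at h0
        exact h0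
      · intro k _ hk
        rcases lt_or_gt_of_ne hk with h | h
        · rw [ih k.val (hn ▸ h) k j rfl (h.trans hij), mul_zero]
        · rw [hlow i k h, zero_mul]
      · intro h; exact absurd (Finset.mem_univ i) h
  have hGlow' : ∀ i j : Fin K, i < j → G i j = 0 := fun i j hij =>
    hGlow i.val i j rfl hij
  -- Step 2: G has unit diagonal
  have hGdiag : ∀ i : Fin K, G i i = 1 := by
    intro i
    have h0 := hdiag1' i
    rw [Matrix.mul_apply] at h0
    rw [Finset.sum_eq_single i] at h0
    · rw [hdiag1 i, one_mul] at h0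
      exact h0
    · intro k _ hk
      rcases lt_or_gt_of_ne hk with h | h
      · rw [hGlow' k i h, mul_zero]
      · rw [hlow i k h, zero_mul]
    · intro h; exact absurd (Finset.mem_univ i) h
  -- Step 3: diagonal d = G * diagonal e * Gᵀ with e the diagonal of the middle matrix
  set e : Fin K → ℝ := fun i => (G⁻¹ * Matrix.diagonal d * (G⁻¹)ᵀ) i i with he
  have hEeq : G⁻¹ * Matrix.diagonal d * (G⁻¹)ᵀ = Matrix.diagonal e :=
    (hMdiag.diagonal_diag).symm
  have hGTdet : IsUnit Gᵀ.det := by rwa [Matrix.det_transpose]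
  have hD : G * Matrix.diagonal e * Gᵀ = Matrix.diagonal d := by
    rw [← hEeq, Matrix.transpose_nonsing_inv]
    calc G * (G⁻¹ * Matrix.diagonal d * Gᵀ⁻¹) * Gᵀ
        = (G * G⁻¹) * Matrix.diagonal d * (Gᵀ⁻¹ * Gᵀ) := by
          noncomm_ring
      _ = Matrix.diagonal d := by
          rw [Matrix.mul_nonsing_inv G hGdet, Matrix.nonsing_inv_mul Gᵀ hGTdet,
            one_mul, mul_one]
  -- Step 4: each e j is nonzero
  have hprodd : (∏ i, d i) ≠ 0 :=
    Finset.prod_ne_zero_iff.mpr fun i _ => (hd i).ne'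
  have hdetD : G.det * (∏ i, e i) * G.det = ∏ i, d i := by
    have := congrArg Matrix.det hD
    rwa [Matrix.det_mul, Matrix.det_mul, Matrix.det_diagonal, Matrix.det_diagonal,
      Matrix.det_transpose] at this
  have hprode : (∏ i, e i) ≠ 0 := by
    intro h
    rw [h, mul_zero, zero_mul] at hdetD
    exact hprodd hdetD.symm
  have hene : ∀ j : Fin K, e j ≠ 0 := by
    intro j hj
    exact hprode (Finset.prod_eq_zero (Finset.mem_univ j) hj)
  -- entrywise formula for the triple product
  have key : ∀ i j : Fin K, (G * Matrix.diagonal e * Gᵀ) i j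
      = ∑ l, G i l * e l * G j l := by
    intro i j
    rw [Matrix.mul_apply]
    refine Finset.sum_congr rfl fun l _ => ?_
    rw [Matrix.mul_diagonal, Matrix.transpose_apply]
  -- Step 5: strictly lower entries of G vanish
  have hGup : ∀ (n : ℕ) (j i : Fin K), j.val = n → j < i → G i j = 0 := by
    intro n
    induction n using Nat.strong_induction_on with
    | _ n ih =>
      intro j i hn hji
      have h0 : (G * Matrix.diagonal e * Gᵀ) i j = 0 := by
        rw [hD, Matrix.diagonal_apply_ne d (hji.ne' : i ≠ j)]
      rw [key i j, Finset.sum_eq_single j] at h0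
      · rw [hGdiag j, mul_one] at h0
        exact (mul_eq_zero.mp h0).resolve_right (hene j)
      · intro l _ hl
        rcases lt_or_gt_of_ne hl with h | h
        · rw [ih l.val (hn ▸ h) l j rfl (h : l < j), mul_zero]
        · rw [hGlow' j l h, mul_zero]
      · intro h; exact absurd (Finset.mem_univ j) h
  -- conclude
  ext i j
  rcases lt_trichotomy i j with h | h | h
  · rw [hGlow' i j h, Matrix.one_apply_ne h.ne]
  · rw [h, hGdiag j, Matrix.one_apply_eq]
  · rw [hGup j.val j i rfl h, Matrix.one_apply_ne h.ne']
end

section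
/- Fix r ∈ {1,…,K} and a K×K invertible matrix G. Let Λ ∈ ℝ^{J×K}, and suppose there is an index set A ⊆ {1,…,J} with |A| = K−1 such that Λ_{[A, r]} = 0 and the (K−1)×(K−1) submatrix Λ_{[A, −r]} (rows A, all columns except r) has rank K−1. If (Λ G)_{[A, r]} = 0 as well, then the r-th column of G is a scalar multiple of the r-th standard basis vector e_r, i.e., G_{[,r]} = c·e_r for some c ∈ ℝ, c ≠ 0. -/
/-!
Since `Λ_{[A,r]} = 0`, the entries of column `r` of `Λ G` in the rows `A` are
`Λ_{[A,−r]}` applied to column `r` of `G` with its `r`-th entry removed. A matrix whose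
rank equals its number of columns has injective `mulVec`, so those off-diagonal entries
vanish; invertibility of `G` then forces `G r r ≠ 0`.
-/

namespace Matrix

variable {m n o ι 𝕜 : Type*} [Field 𝕜] [Fintype n]

theorem mulVec_injective_of_rank_eq_card {M : Matrix m n 𝕜} (h : M.rank = Fintype.card n) :
    Function.Injective M.mulVec := by
  rw [mulVec_injective_iff, linearIndependent_iff_card_eq_finrank_span, ← h,
    rank_eq_finrank_span_cols]
  rfl

theorem col_ne_zero_of_isUnit [DecidableEq n] {G : Matrix n n 𝕜} (hG : IsUnit G) (j : n) :
    G.col j ≠ 0 :=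
  (linearIndependent_cols_iff_isUnit.mpr hG).ne_zero j

theorem mul_apply_eq_add_sum_subtype_ne [DecidableEq n] (Λ : Matrix m n 𝕜) (G : Matrix n o 𝕜)
    (i : m) (r : n) (k : o) :
    (Λ * G) i k = Λ i r * G r k + ∑ s : {s // s ≠ r}, Λ i s * G s k := by
  rw [mul_apply, Fintype.sum_eq_add_sum_compl r,
    Finset.sum_subtype {r}ᶜ (p := (· ≠ r)) (by simp)]

theorem apply_eq_zero_of_submatrix_rank [DecidableEq n] (Λ : Matrix m n 𝕜) (G : Matrix n o 𝕜)
    (f : ι → m) (r : n) (k : o) (hzero : ∀ a, Λ (f a) r = 0)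
    (hrank : (Λ.submatrix f (fun s : {s // s ≠ r} => (s : n))).rank = Fintype.card n - 1)
    (hzero' : ∀ a, (Λ * G) (f a) k = 0) {s : n} (hs : s ≠ r) : G s k = 0 := by
  have hcard : Fintype.card {s // s ≠ r} = Fintype.card n - 1 := by
    simp [Fintype.card_subtype_compl]
  have hkernel : Λ.submatrix f (fun s : {s // s ≠ r} => (s : n)) *ᵥ (fun s => G s k) = 0 := by
    funext a
    simpa [mul_apply_eq_add_sum_subtype_ne Λ G (f a) r, hzero, mulVec, dotProduct] using hzero' a
  have hcol := mulVec_injective_of_rank_eq_card (hrank.trans hcard.symm)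
    (hkernel.trans (mulVec_zero _).symm)
  exact congrFun hcol ⟨s, hs⟩

end Matrix

theorem stmt_12_general {J K : ℕ} (r : Fin K) (G : Matrix (Fin K) (Fin K) ℝ)
    (hG : IsUnit G) (Λ : Matrix (Fin J) (Fin K) ℝ) (A : Finset (Fin J))
    (hzero : ∀ j ∈ A, Λ j r = 0)
    (hrank : (Λ.submatrix (fun a : A => (a : Fin J))
        (fun s : {s : Fin K // s ≠ r} => (s : Fin K))).rank = K - 1)
    (hzero' : ∀ j ∈ A, (Λ * G) j r = 0) :
    ∃ c : ℝ, c ≠ 0 ∧ ∀ i : Fin K, G i r = c * (Pi.single r 1 : Fin K → ℝ) i := by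
  have hoff : ∀ s ≠ r, G s r = 0 := fun s hs =>
    Λ.apply_eq_zero_of_submatrix_rank G (fun a : A => (a : Fin J)) r r (fun a => hzero a a.2)
      (by rwa [Fintype.card_fin]) (fun a => hzero' a a.2) hs
  have hdiag : G r r ≠ 0 := fun h0 => Matrix.col_ne_zero_of_isUnit hG r <| funext fun s => by
    rcases eq_or_ne s r with rfl | hs
    · exact h0
    · exact hoff s hs
  refine ⟨G r r, hdiag, fun i => ?_⟩
  rcases eq_or_ne i r with rfl | hi
  · simp
  · simp [hoff i hi, hi]

theorem stmt_12 {J K : ℕ} (r : Fin K) (G : Matrix (Fin K) (Fin K) ℝ)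
    (hG : IsUnit G) (Λ : Matrix (Fin J) (Fin K) ℝ) (A : Finset (Fin J))
    (hcard : A.card = K - 1)
    (hzero : ∀ j ∈ A, Λ j r = 0)
    (hrank : (Λ.submatrix (fun a : A => (a : Fin J))
        (fun s : {s : Fin K // s ≠ r} => (s : Fin K))).rank = K - 1)
    (hzero' : ∀ j ∈ A, (Λ * G) j r = 0) :
    ∃ c : ℝ, c ≠ 0 ∧ ∀ i : Fin K, G i r = c * (Pi.single r 1 : Fin K → ℝ) i :=
  stmt_12_general r G hG Λ A hzero hrank hzero'
end

section
/- Let Λ ∈ ℝ^{J×K} with J ≥ K, and suppose for each r ∈ {2,…,K} there are sets A_r ⊆ {1,…,J} with |A_r| = r−1, rank(Λ_{[A_r, 1:r]}) = r−1, and Λ_{[A_r, r]} = 0. Let G ∈ ℝ^{K×K} be orthogonal with (Λ G)_{[A_r, r]} = 0 for all r ∈ {2,…,K}. Then G is a signed permutation matrix. -/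
open Matrix

/-- A signed permutation matrix. -/
def IsSignedPerm {K : ℕ} (P : Matrix (Fin K) (Fin K) ℝ) : Prop :=
  Pᵀ * P = 1 ∧ (∀ i : Fin K, ∃! j : Fin K, P i j ≠ 0) ∧
    (∀ j : Fin K, ∃! i : Fin K, P i j ≠ 0) ∧
    (∀ i j : Fin K, P i j ≠ 0 → P i j = 1 ∨ P i j = -1)

theorem stmt_17 {J K : ℕ} (hJK : K ≤ J) (Λ : Matrix (Fin J) (Fin K) ℝ)
    (A : Fin K → Finset (Fin J))
    (hcard : ∀ r : Fin K, 1 ≤ r.val → (A r).card = r.val)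
    (hzero : ∀ r : Fin K, 1 ≤ r.val → ∀ j ∈ A r, Λ j r = 0)
    (hrank : ∀ r : Fin K, 1 ≤ r.val →
      (Λ.submatrix (fun a : (A r) => (a : Fin J))
        (fun s : Fin (r.val + 1) => Fin.castLE r.isLt s)).rank = r.val)
    (G : Matrix (Fin K) (Fin K) ℝ) (horth : Gᵀ * G = 1)
    (hzero' : ∀ r : Fin K, 1 ≤ r.val → ∀ j ∈ A r, (Λ * G) j r = 0) :
    IsSignedPerm G := by
  classical
  have hdiagsq : ∀ r : Fin K, ∑ m, G m r * G m r = 1 := by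
    intro r
    have h := congrFun (congrFun horth r) r
    simpa [Matrix.mul_apply, Matrix.one_apply] using h
  have horthcol : ∀ r k : Fin K, r ≠ k → ∑ m, G m r * G m k = 0 := by
    intro r k hrk
    have h := congrFun (congrFun horth r) k
    simpa [Matrix.mul_apply, Matrix.one_apply, hrk] using h
  have Qmain : ∀ n : ℕ, ∀ r : Fin K, K - r.val = n → ∀ k, k ≠ r → G k r = 0 := by
    intro n
    induction n using Nat.strong_induction_on with
    | _ n ih =>
      intro r hr
      -- entries below the diagonal (row index larger than r) vanish
      have hupper : ∀ m : Fin K, r < m → G m r = 0 := by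
        intro m hm
        have hm' : r.val < m.val := hm
        have Qm : ∀ p, p ≠ m → G p m = 0 := by
          refine ih (K - m.val) ?_ m rfl
          have := m.isLt
          omega
        have hGmm : G m m * G m m = 1 := by
          have h := hdiagsq m
          rwa [Finset.sum_eq_single m (fun p _ hp => by rw [Qm p hp, zero_mul])
            (by simp)] at h
        have hGmm0 : G m m ≠ 0 := by
          intro h0
          rw [h0, mul_zero] at hGmm
          exact zero_ne_one hGmm
        have h0 : G m r * G m m = 0 := by
          have h := horthcol r m (ne_of_lt hm)
          rwa [Finset.sum_eq_single m (fun p _ hp => by rw [Qm p hp, mul_zero])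
            (by simp)] at h
        rcases mul_eq_zero.mp h0 with h | h
        · exact h
        · exact absurd h hGmm0
      intro k hk
      rcases lt_or_gt_of_ne hk with hkr | hkr
      · -- k < r : kernel argument
        have hkr' : k.val < r.val := hkr
        have hr1 : 1 ≤ r.val := by omega
        set M := Λ.submatrix (fun a : (A r) => (a : Fin J))
          (fun s : Fin (r.val + 1) => Fin.castLE r.isLt s) with hM
        set w : Fin (r.val + 1) → ℝ := Pi.single (Fin.last r.val) 1 with hwdef
        set v : Fin (r.val + 1) → ℝ := fun s => G (Fin.castLE r.isLt s) r with hvdef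
        have hcast_last : Fin.castLE r.isLt (Fin.last r.val) = r := by
          ext; simp
        have hMw : M.mulVecLin w = 0 := by
          ext j
          have : (M *ᵥ w) j = M j (Fin.last r.val) := by
            simp [Matrix.mulVec, dotProduct, hwdef, Pi.single_apply, mul_comm]
          simp only [Matrix.mulVecLin_apply, this, Pi.zero_apply]
          have : M j (Fin.last r.val) = Λ (j : Fin J) r := by
            rw [hM]; simp [Matrix.submatrix_apply, hcast_last]
          rw [this]
          exact hzero r hr1 j j.2
        have hMv : M.mulVecLin v = 0 := by
          ext j
          simp only [Matrix.mulVecLin_apply, Pi.zero_apply]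
          have h0 : (Λ * G) (j : Fin J) r = 0 := hzero' r hr1 j j.2
          rw [Matrix.mul_apply] at h0
          set g : ℕ → ℝ := fun i => if h : i < K then Λ (j : Fin J) ⟨i, h⟩ * G ⟨i, h⟩ r else 0
            with hgdef
          have e1 : ∑ m : Fin K, Λ (j : Fin J) m * G m r = ∑ i ∈ Finset.range K, g i := by
            rw [← Fin.sum_univ_eq_sum_range g K]
            refine Finset.sum_congr rfl fun m _ => ?_
            simp [hgdef, m.isLt]
          have e2 : (M *ᵥ v) j = ∑ i ∈ Finset.range (r.val + 1), g i := by
            rw [← Fin.sum_univ_eq_sum_range g (r.val + 1)]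
            simp only [Matrix.mulVec, dotProduct]
            refine Finset.sum_congr rfl fun s _ => ?_
            have hs : s.val < K := lt_of_le_of_lt (Nat.lt_succ_iff.mp s.isLt) r.isLt
            have hcs : (⟨s.val, hs⟩ : Fin K) = Fin.castLE r.isLt s := rfl
            simp [hgdef, hs, hM, hvdef, hcs]
          have e3 : ∑ i ∈ Finset.range (r.val + 1), g i = ∑ i ∈ Finset.range K, g i := by
            refine Finset.sum_subset (Finset.range_subset_range.mpr r.isLt) ?_
            intro x hx hnx
            simp only [Finset.mem_range] at hx hnx
            have hx1 : r.val < x := by omega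
            simp only [hgdef, dif_pos hx]
            rw [hupper ⟨x, hx⟩ hx1, mul_zero]
          rw [e2, e3, ← e1, h0]
        have hcardA : Fintype.card (A r) = r.val := by
          rw [Fintype.card_coe]; exact hcard r hr1
        have hker : Module.finrank ℝ (LinearMap.ker M.mulVecLin) = 1 := by
          have h := LinearMap.finrank_range_add_finrank_ker M.mulVecLin
          have hdom : Module.finrank ℝ (Fin (r.val + 1) → ℝ) = r.val + 1 :=
            Module.finrank_fin_fun ℝ
          have hrk : Module.finrank ℝ (LinearMap.range M.mulVecLin) = r.val :=
            hrank r hr1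
          omega
        have hw0 : w ≠ 0 := by
          intro h
          have := congrFun h (Fin.last r.val)
          simp [hwdef] at this
        have hspan : Submodule.span ℝ {w} = LinearMap.ker M.mulVecLin := by
          apply Submodule.eq_of_le_of_finrank_le
          · rw [Submodule.span_singleton_le_iff_mem]
            exact LinearMap.mem_ker.mpr hMw
          · rw [hker, finrank_span_singleton hw0]
        have hvmem : v ∈ Submodule.span ℝ {w} := by
          rw [hspan]; exact LinearMap.mem_ker.mpr hMv
        obtain ⟨c, hc⟩ := Submodule.mem_span_singleton.mp hvmem
        have hk' : k.val < r.val + 1 := by omega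
        have hvk : v ⟨k.val, hk'⟩ = G k r := rfl
        have hne : (⟨k.val, hk'⟩ : Fin (r.val + 1)) ≠ Fin.last r.val := by
          intro h
          have := congrArg Fin.val h
          simp [Fin.last] at this
          omega
        rw [← hvk, ← hc]
        simp [hwdef, Pi.single_apply, hne]
      · exact hupper k hkr
  have Q : ∀ r : Fin K, ∀ k, k ≠ r → G k r = 0 := fun r => Qmain (K - r.val) r rfl
  have hdiag : ∀ r : Fin K, G r r = 1 ∨ G r r = -1 := by
    intro r
    have h := hdiagsq r
    rw [Finset.sum_eq_single r (fun m _ hm => by rw [Q r m hm, zero_mul]) (by simp)] at h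
    exact mul_self_eq_one_iff.mp h
  have hdiag0 : ∀ r : Fin K, G r r ≠ 0 := by
    intro r
    rcases hdiag r with h | h <;> rw [h] <;> norm_num
  refine ⟨horth, ?_, ?_, ?_⟩
  · intro i
    refine ⟨i, hdiag0 i, fun j hj => ?_⟩
    by_contra hne
    exact hj (Q j i fun h => hne h.symm)
  · intro j
    refine ⟨j, hdiag0 j, fun i hi => ?_⟩
    by_contra hne
    exact hi (Q j i hne)
  · intro i j hij
    have hij' : i = j := by
      by_contra hne
      exact hij (Q j i hne)
    rw [hij']
    exact hdiag j
end
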